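/- Let (U, A, η, a) with twist constant K be a smooth areal solution on [R₀,R*). Then the energies 𝓔 and 𝓔_K are non-increasing: for all R₀ ≤ R ≤ R' < R*, 𝓔(R') ≤ 𝓔(R) and 𝓔_K(R') ≤ 𝓔_K(R); moreover for every R ∈ (R₀,R*), (d/dR) 𝓔(R) = − (K²/(2R³)) ∫₀^{2π} E e^{2η} dθ − (2/R) ∫₀^{2π} ( a⁻¹ (∂_R U)² + (e^{4U}/(4R²)) a (∂_θ A)² ) dθ and (d/dR) 𝓔_K(R) = − (K²/R⁵) ∫₀^{2π} a⁻¹ e^{2η} dθ − (2/R) ∫₀^{2π} ( a⁻¹ (∂_R U)² + (e^{4U}/(4R²)) a (∂_θ A)² ) dθ. -/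

import Mathlib

open Real

noncomputable section

/-- Partial derivative in the first (areal time `R`) variable. -/
def pd1 (f : ℝ → ℝ → ℝ) (x y : ℝ) : ℝ := deriv (fun s => f s y) x

/-- Partial derivative in the second (space `θ`) variable. -/
def pd2 (f : ℝ → ℝ → ℝ) (x y : ℝ) : ℝ := deriv (fun s => f x s) y

/-- The energy density `E := a⁻¹ U_R² + a U_θ² + (e^{4U}/(4R²))(a⁻¹ A_R² + a A_θ²)`. -/
def Edens (U A a : ℝ → ℝ → ℝ) (r θ : ℝ) : ℝ :=
  (a r θ)⁻¹ * (pd1 U r θ) ^ 2 + a r θ * (pd2 U r θ) ^ 2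
    + exp (4 * U r θ) / (4 * r ^ 2) *
        ((a r θ)⁻¹ * (pd1 A r θ) ^ 2 + a r θ * (pd2 A r θ) ^ 2)

/-- The flux density `F := 2 U_R U_θ + (e^{4U}/(2R²)) A_R A_θ`. -/
def Fdens (U A : ℝ → ℝ → ℝ) (r θ : ℝ) : ℝ :=
  2 * pd1 U r θ * pd2 U r θ
    + exp (4 * U r θ) / (2 * r ^ 2) * (pd1 A r θ * pd2 A r θ)

/-- A smooth solution `(U, A, η, a)` of the `T²`-symmetric vacuum Einstein equations
in areal coordinates, with twist constant `K`, on the time set `D` (times `ℝ` in the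
space variable `θ`, with all coefficients `2π`-periodic in `θ` and `a > 0`).
The equations are (A1), (A2), (A3) and the constraints (A4) of the paper. -/
structure ArealSol (D : Set ℝ) (K : ℝ) where
  U : ℝ → ℝ → ℝ
  A : ℝ → ℝ → ℝ
  η : ℝ → ℝ → ℝ
  a : ℝ → ℝ → ℝ
  smooth_U : ContDiff ℝ (⊤ : ℕ∞) (Function.uncurry U)
  smooth_A : ContDiff ℝ (⊤ : ℕ∞) (Function.uncurry A)
  smooth_η : ContDiff ℝ (⊤ : ℕ∞) (Function.uncurry η)
  smooth_a : ContDiff ℝ (⊤ : ℕ∞) (Function.uncurry a)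
  periodic_U : ∀ r θ : ℝ, U r (θ + 2 * π) = U r θ
  periodic_A : ∀ r θ : ℝ, A r (θ + 2 * π) = A r θ
  periodic_η : ∀ r θ : ℝ, η r (θ + 2 * π) = η r θ
  periodic_a : ∀ r θ : ℝ, a r (θ + 2 * π) = a r θ
  apos : ∀ r ∈ D, ∀ θ : ℝ, 0 < a r θ
  eq_U : ∀ r ∈ D, ∀ θ : ℝ,
    pd1 (fun r' θ' => r' * (a r' θ')⁻¹ * pd1 U r' θ') r θ
      - pd2 (fun r' θ' => r' * a r' θ' * pd2 U r' θ') r θ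
      = exp (4 * U r θ) / (2 * r) *
          ((a r θ)⁻¹ * (pd1 A r θ) ^ 2 - a r θ * (pd2 A r θ) ^ 2)
  eq_A : ∀ r ∈ D, ∀ θ : ℝ,
    pd1 (fun r' θ' => r'⁻¹ * (a r' θ')⁻¹ * pd1 A r' θ') r θ
      - pd2 (fun r' θ' => r'⁻¹ * a r' θ' * pd2 A r' θ') r θ
      = (4 / r) * (a r θ * pd2 U r θ * pd2 A r θ - (a r θ)⁻¹ * pd1 U r θ * pd1 A r θ)
  eq_a : ∀ r ∈ D, ∀ θ : ℝ,
    pd1 (fun r' θ' => Real.log (a r' θ')) r θ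
      = -(K ^ 2 * exp (2 * η r θ)) / (2 * r ^ 3)
  eq_ηR : ∀ r ∈ D, ∀ θ : ℝ,
    pd1 η r θ + K ^ 2 / (4 * r ^ 3) * exp (2 * η r θ) = a r θ * r * Edens U A a r θ
  eq_ηθ : ∀ r ∈ D, ∀ θ : ℝ,
    pd2 η r θ = r * Fdens U A r θ

/-- The areal energy `𝓔(R)`. -/
def En (U A a : ℝ → ℝ → ℝ) (r : ℝ) : ℝ :=
  ∫ θ in (0:ℝ)..(2 * π), Edens U A a r θ

/-- The modified areal energy `𝓔_K(R)`. -/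
def EnK (K : ℝ) (U A η a : ℝ → ℝ → ℝ) (r : ℝ) : ℝ :=
  ∫ θ in (0:ℝ)..(2 * π),
    (Edens U A a r θ + K ^ 2 / (4 * r ^ 4) * exp (2 * η r θ) * (a r θ)⁻¹)

end

/-!
Differentiating the energy density in `R` and eliminating `∂_R² U`, `∂_R² A` and `∂_R a` with
(A1), (A2) and (A3) gives the pointwise identity
`∂_R E = ∂_θ (a F) - (K² / (2R³)) E e^{2η} - (2/R) (a⁻¹ (∂_R U)² + (e^{4U}/(4R²)) a (∂_θ A)²)`.
The divergence term integrates to zero over a period, which gives `d𝓔/dR`. For `𝓔_K`, the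
`R`-derivative of the twist term `(K²/(4R⁴)) e^{2η} a⁻¹`, computed with (A3) and (A4), cancels the
`E e^{2η}` term. Since `a > 0` both derivatives are nonpositive, and both energies are continuous
up to `R₀`, so they are non-increasing on `[R₀, R*)`.
-/

open Function Set MeasureTheory

section PartialDerivatives

variable {f : ℝ → ℝ → ℝ} {x y : ℝ}

lemma hasDerivAt_pd1_of_differentiableAt (hf : DifferentiableAt ℝ (uncurry f) (x, y)) :
    HasDerivAt (fun s => f s y) (fderiv ℝ (uncurry f) (x, y) (1, 0)) x :=
  hf.hasFDerivAt.comp_hasDerivAt (f := fun s => (s, y)) x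
    ((hasDerivAt_id x).prodMk (hasDerivAt_const x y))

lemma hasDerivAt_pd2_of_differentiableAt (hf : DifferentiableAt ℝ (uncurry f) (x, y)) :
    HasDerivAt (fun t => f x t) (fderiv ℝ (uncurry f) (x, y) (0, 1)) y :=
  hf.hasFDerivAt.comp_hasDerivAt (f := fun t => (x, t)) y
    ((hasDerivAt_const y x).prodMk (hasDerivAt_id y))

lemma pd1_eq_fderiv (hf : DifferentiableAt ℝ (uncurry f) (x, y)) :
    pd1 f x y = fderiv ℝ (uncurry f) (x, y) (1, 0) :=
  (hasDerivAt_pd1_of_differentiableAt hf).deriv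

lemma pd2_eq_fderiv (hf : DifferentiableAt ℝ (uncurry f) (x, y)) :
    pd2 f x y = fderiv ℝ (uncurry f) (x, y) (0, 1) :=
  (hasDerivAt_pd2_of_differentiableAt hf).deriv

lemma pd1_periodic {T : ℝ} (hf : ∀ x, Periodic (f x) T) (x : ℝ) : Periodic (pd1 f x) T :=
  fun y => congrArg (deriv · x) (funext fun s => hf s y)

lemma pd2_periodic {T : ℝ} (hf : ∀ x, Periodic (f x) T) (x : ℝ) : Periodic (pd2 f x) T :=
  fun y => by
    simp only [pd2, ← deriv_comp_add_const]
    exact congrArg (deriv · y) (funext (hf x))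

namespace ContDiff

lemma hasDerivAt_pd1 (hf : ContDiff ℝ (⊤ : ℕ∞) (uncurry f)) (x y : ℝ) :
    HasDerivAt (fun s => f s y) (_root_.pd1 f x y) x :=
  pd1_eq_fderiv (hf.differentiable (by simp) _) ▸
    hasDerivAt_pd1_of_differentiableAt (hf.differentiable (by simp) _)

lemma hasDerivAt_pd2 (hf : ContDiff ℝ (⊤ : ℕ∞) (uncurry f)) (x y : ℝ) :
    HasDerivAt (fun t => f x t) (_root_.pd2 f x y) y :=
  pd2_eq_fderiv (hf.differentiable (by simp) _) ▸
    hasDerivAt_pd2_of_differentiableAt (hf.differentiable (by simp) _)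

lemma uncurry_pd1_eq (hf : ContDiff ℝ (⊤ : ℕ∞) (uncurry f)) :
    uncurry (_root_.pd1 f) = fun p => fderiv ℝ (uncurry f) p (1, 0) :=
  funext fun p => pd1_eq_fderiv (hf.differentiable (by simp) p)

lemma uncurry_pd2_eq (hf : ContDiff ℝ (⊤ : ℕ∞) (uncurry f)) :
    uncurry (_root_.pd2 f) = fun p => fderiv ℝ (uncurry f) p (0, 1) :=
  funext fun p => pd2_eq_fderiv (hf.differentiable (by simp) p)

lemma pd1 (hf : ContDiff ℝ (⊤ : ℕ∞) (uncurry f)) :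
    ContDiff ℝ (⊤ : ℕ∞) (uncurry (_root_.pd1 f)) :=
  hf.uncurry_pd1_eq ▸ (hf.fderiv_right le_rfl).clm_apply contDiff_const

lemma pd2 (hf : ContDiff ℝ (⊤ : ℕ∞) (uncurry f)) :
    ContDiff ℝ (⊤ : ℕ∞) (uncurry (_root_.pd2 f)) :=
  hf.uncurry_pd2_eq ▸ (hf.fderiv_right le_rfl).clm_apply contDiff_const

lemma contDiff_slice (hf : ContDiff ℝ (⊤ : ℕ∞) (uncurry f)) (x : ℝ) :
    ContDiff ℝ (⊤ : ℕ∞) (f x) :=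
  hf.comp (contDiff_const.prodMk contDiff_id)

lemma pd1_pd2 (hf : ContDiff ℝ (⊤ : ℕ∞) (uncurry f)) (x y : ℝ) :
    _root_.pd1 (_root_.pd2 f) x y = _root_.pd2 (_root_.pd1 f) x y := by
  have hd : DifferentiableAt ℝ (fderiv ℝ (uncurry f)) (x, y) :=
    (hf.fderiv_right (m := (⊤ : ℕ∞)) le_rfl).differentiable (by simp) _
  rw [pd1_eq_fderiv (hf.pd2.differentiable (by simp) _),
    pd2_eq_fderiv (hf.pd1.differentiable (by simp) _), hf.uncurry_pd1_eq, hf.uncurry_pd2_eq,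
    fderiv_clm_apply hd (differentiableAt_const _), fderiv_clm_apply hd (differentiableAt_const _)]
  simpa using hf.contDiffAt.isSymmSndFDerivAt
    (by simpa using WithTop.coe_le_coe.2 (le_top : (2 : ℕ∞) ≤ ⊤)) (1, 0) (0, 1)

end ContDiff

end PartialDerivatives

section ParametricIntegrals

variable {G : ℝ → ℝ → ℝ} {s : Set ℝ}

lemma continuousOn_intervalIntegral_of_continuousOn
    (hG : ContinuousOn (uncurry G) (s ×ˢ univ)) (a b : ℝ) :
    ContinuousOn (fun x => ∫ t in a..b, G x t) s := by
  rw [continuousOn_iff_continuous_domRestrict]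
  have : Continuous (uncurry fun (x : s) t => G x t) :=
    hG.comp_continuous (continuous_subtype_val.prodMap continuous_id)
      fun p => ⟨p.1.2, mem_univ _⟩
  exact intervalIntegral.continuous_parametric_intervalIntegral_of_continuous' this a b

lemma hasDerivAt_intervalIntegral_of_contDiffOn (hs : IsOpen s)
    (hG : ContDiffOn ℝ 1 (uncurry G) (s ×ˢ univ)) {x : ℝ} (hx : x ∈ s) (a b : ℝ) :
    HasDerivAt (fun x => ∫ t in a..b, G x t) (∫ t in a..b, pd1 G x t) x := by
  have hO : IsOpen (s ×ˢ (univ : Set ℝ)) := hs.prod isOpen_univ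
  have hdiff : ∀ y ∈ s, ∀ t, DifferentiableAt ℝ (uncurry G) (y, t) := fun y hy t =>
    (hG.differentiableOn one_ne_zero).differentiableAt (hO.mem_nhds ⟨hy, mem_univ t⟩)
  have hG' : ∀ y ∈ s, ∀ t, HasDerivAt (fun x => G x t) (pd1 G y t) y := fun y hy t =>
    pd1_eq_fderiv (hdiff y hy t) ▸ hasDerivAt_pd1_of_differentiableAt (hdiff y hy t)
  have hcont : ContinuousOn (uncurry (pd1 G)) (s ×ˢ univ) :=
    ((hG.continuousOn_fderiv_of_isOpen hO le_rfl).clm_apply continuousOn_const).congr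
      fun p hp => pd1_eq_fderiv (hdiff p.1 hp.1 p.2)
  obtain ⟨ε, hε, hball⟩ := Metric.nhds_basis_closedBall.mem_iff.1 (hs.mem_nhds hx)
  obtain ⟨C, hC⟩ := ((isCompact_closedBall x ε).prod isCompact_uIcc).exists_bound_of_continuousOn
    (hcont.mono (prod_mono hball (subset_univ (uIcc a b))))
  refine (intervalIntegral.hasDerivAt_integral_of_dominated_loc_of_deriv_le (bound := fun _ => C)
    (Metric.ball_mem_nhds x hε) ?_ ?_ ?_ ?_ intervalIntegrable_const ?_).2
  · filter_upwards [hs.mem_nhds hx] with y hy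
    exact (continuousOn_univ.1 (hG.continuousOn.uncurry_left y hy)).aestronglyMeasurable
  · exact (continuousOn_univ.1 (hG.continuousOn.uncurry_left x hx)).intervalIntegrable a b
  · exact (continuousOn_univ.1 (hcont.uncurry_left x hx)).aestronglyMeasurable
  · exact ae_of_all _ fun t ht y hy =>
      hC (y, t) ⟨Metric.ball_subset_closedBall hy, uIoc_subset_uIcc ht⟩
  · exact ae_of_all _ fun t _ y hy => hG' y (hball (Metric.ball_subset_closedBall hy)) t

end ParametricIntegrals

lemma Function.Periodic.intervalIntegral_deriv_eq_zero {h : ℝ → ℝ} {T : ℝ}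
    (hper : Periodic h T) (hh : ContDiff ℝ 1 h) : ∫ x in 0..T, deriv h x = 0 := by
  rw [intervalIntegral.integral_deriv_eq_sub (fun x _ => hh.differentiable one_ne_zero x)
    ((hh.continuous_deriv le_rfl).intervalIntegrable 0 T), ← hper 0, zero_add, sub_self]

lemma Function.Periodic.intervalIntegral_deriv_sub_sub {h f g : ℝ → ℝ} {T : ℝ}
    (hper : Periodic h T) (hh : ContDiff ℝ 1 h) (hf : Continuous f) (hg : Continuous g)
    (c d : ℝ) :
    ∫ x in 0..T, (deriv h x - c * f x - d * g x)
      = -c * (∫ x in 0..T, f x) - d * ∫ x in 0..T, g x := by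
  have ih := (hh.continuous_deriv le_rfl).intervalIntegrable (μ := volume) 0 T
  have hf' := (hf.intervalIntegrable (μ := volume) 0 T).const_mul c
  have hg' := (hg.intervalIntegrable (μ := volume) 0 T).const_mul d
  rw [intervalIntegral.integral_sub (ih.sub hf') hg', intervalIntegral.integral_sub ih hf',
    hper.intervalIntegral_deriv_eq_zero hh, intervalIntegral.integral_const_mul,
    intervalIntegral.integral_const_mul]
  ring

noncomputable def dissipationDens (U A a : ℝ → ℝ → ℝ) (r θ : ℝ) : ℝ :=
  (a r θ)⁻¹ * (pd1 U r θ) ^ 2 + exp (4 * U r θ) / (4 * r ^ 2) * a r θ * (pd2 A r θ) ^ 2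

noncomputable def twistDens (K : ℝ) (η a : ℝ → ℝ → ℝ) (r θ : ℝ) : ℝ :=
  K ^ 2 / (4 * r ^ 4) * exp (2 * η r θ) * (a r θ)⁻¹

section Densities

variable {U A η a : ℝ → ℝ → ℝ}

lemma contDiffOn_Edens (hU : ContDiff ℝ (⊤ : ℕ∞) (uncurry U))
    (hA : ContDiff ℝ (⊤ : ℕ∞) (uncurry A)) (ha : ContDiff ℝ (⊤ : ℕ∞) (uncurry a)) :
    ContDiffOn ℝ (⊤ : ℕ∞) (uncurry (Edens U A a)) {p | p.1 ≠ 0 ∧ a p.1 p.2 ≠ 0} := by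
  have hU₁ : ContDiff ℝ (⊤ : ℕ∞) fun p : ℝ × ℝ => pd1 U p.1 p.2 := hU.pd1
  have hU₂ : ContDiff ℝ (⊤ : ℕ∞) fun p : ℝ × ℝ => pd2 U p.1 p.2 := hU.pd2
  have hA₁ : ContDiff ℝ (⊤ : ℕ∞) fun p : ℝ × ℝ => pd1 A p.1 p.2 := hA.pd1
  have hA₂ : ContDiff ℝ (⊤ : ℕ∞) fun p : ℝ × ℝ => pd2 A p.1 p.2 := hA.pd2
  have hU' : ContDiff ℝ (⊤ : ℕ∞) fun p : ℝ × ℝ => U p.1 p.2 := hU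
  have ha' : ContDiff ℝ (⊤ : ℕ∞) fun p : ℝ × ℝ => a p.1 p.2 := ha
  unfold Edens uncurry
  fun_prop (disch := intro p hp; simp_all)

lemma contDiffOn_twistDens (K : ℝ) (hη : ContDiff ℝ (⊤ : ℕ∞) (uncurry η))
    (ha : ContDiff ℝ (⊤ : ℕ∞) (uncurry a)) :
    ContDiffOn ℝ (⊤ : ℕ∞) (uncurry (twistDens K η a)) {p | p.1 ≠ 0 ∧ a p.1 p.2 ≠ 0} := by
  have hη' : ContDiff ℝ (⊤ : ℕ∞) fun p : ℝ × ℝ => η p.1 p.2 := hη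
  have ha' : ContDiff ℝ (⊤ : ℕ∞) fun p : ℝ × ℝ => a p.1 p.2 := ha
  unfold twistDens uncurry
  fun_prop (disch := intro p hp; simp_all)

lemma periodic_Fdens {T : ℝ} (hU : ∀ x, Periodic (U x) T) (hA : ∀ x, Periodic (A x) T)
    (r : ℝ) : Periodic (Fdens U A r) T := fun θ => by
  simp only [Fdens, pd1_periodic hU r θ, pd2_periodic hU r θ, pd1_periodic hA r θ,
    pd2_periodic hA r θ, hU r θ]

lemma Edens_nonneg {r θ : ℝ} (ha : 0 < a r θ) : 0 ≤ Edens U A a r θ := by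
  unfold Edens; positivity

lemma dissipationDens_nonneg {r θ : ℝ} (ha : 0 < a r θ) : 0 ≤ dissipationDens U A a r θ := by
  unfold dissipationDens; positivity

end Densities

namespace ArealSol

variable {D : Set ℝ} {K : ℝ} (S : ArealSol D K) {r : ℝ}

lemma pd1_a (hr : r ∈ D) (θ : ℝ) :
    pd1 S.a r θ = -(K ^ 2 * exp (2 * S.η r θ)) / (2 * r ^ 3) * S.a r θ := by
  have ha := (S.apos r hr θ).ne'
  have h := S.eq_a r hr θ
  rw [pd1, ((S.smooth_a.hasDerivAt_pd1 r θ).log ha).deriv, div_eq_iff ha] at h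
  exact h

lemma hasDerivAt_Edens (hr : r ∈ D) (hr₀ : r ≠ 0) (θ : ℝ) :
    HasDerivAt (fun s => Edens S.U S.A S.a s θ)
      (pd2 (fun r θ => S.a r θ * Fdens S.U S.A r θ) r θ
        - K ^ 2 / (2 * r ^ 3) * (Edens S.U S.A S.a r θ * exp (2 * S.η r θ))
        - 2 / r * dissipationDens S.U S.A S.a r θ) r := by
  have ha := (S.apos r hr θ).ne'
  have hU := S.smooth_U
  have hA := S.smooth_A
  have haR := S.smooth_a.hasDerivAt_pd1 r θ
  have hUR := hU.hasDerivAt_pd1 r θ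
  have hURR := hU.pd1.hasDerivAt_pd1 r θ
  have hUθR := hU.pd2.hasDerivAt_pd1 r θ
  have hARR := hA.pd1.hasDerivAt_pd1 r θ
  have hAθR := hA.pd2.hasDerivAt_pd1 r θ
  have hE := ((haR.fun_inv ha).fun_mul (hURR.fun_pow 2) |>.add (haR.fun_mul (hUθR.fun_pow 2))).add
    (((hUR.const_mul 4).exp.div ((hasDerivAt_pow 2 r).const_mul 4) (by positivity)).fun_mul
      (((haR.fun_inv ha).fun_mul (hARR.fun_pow 2)).add (haR.fun_mul (hAθR.fun_pow 2))))
  have haF := (S.smooth_a.hasDerivAt_pd2 r θ).fun_mul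
    ((((hU.pd1.hasDerivAt_pd2 r θ).const_mul 2).fun_mul (hU.pd2.hasDerivAt_pd2 r θ)).fun_add
      ((((hU.hasDerivAt_pd2 r θ).const_mul 4).exp.div_const (2 * r ^ 2)).fun_mul
        ((hA.pd1.hasDerivAt_pd2 r θ).fun_mul (hA.pd2.hasDerivAt_pd2 r θ))))
  have eU := S.eq_U r hr θ
  rw [pd1, pd2, ((((hasDerivAt_id' r).fun_mul (haR.fun_inv ha)).fun_mul hURR).deriv),
    (((hasDerivAt_const θ r).fun_mul (S.smooth_a.hasDerivAt_pd2 r θ)).fun_mul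
      (hU.pd2.hasDerivAt_pd2 r θ)).deriv] at eU
  have eA := S.eq_A r hr θ
  rw [pd1, pd2, (((hasDerivAt_inv hr₀).fun_mul (haR.fun_inv ha)).fun_mul hARR).deriv,
    (((hasDerivAt_const θ r⁻¹).fun_mul (S.smooth_a.hasDerivAt_pd2 r θ)).fun_mul
      (hA.pd2.hasDerivAt_pd2 r θ)).deriv] at eA
  unfold Fdens
  rw [pd2, haF.deriv]
  refine hE.congr_deriv ?_
  simp only [Edens, dissipationDens, Pi.div_apply, Pi.add_apply, hU.pd1_pd2, hA.pd1_pd2,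
    S.pd1_a hr] at eU eA ⊢
  -- Each multiplier is the coefficient of `∂_R² U` (resp. `∂_R² A`) in `∂_R E` divided by the
  -- one in (A1) (resp. (A2)), so that both second `R`-derivatives drop out.
  linear_combination (norm := skip) (2 * pd1 S.U r θ / r) * eU
    + (exp (4 * S.U r θ) * pd1 S.A r θ / (2 * r)) * eA
  field_simp
  ring

lemma hasDerivAt_twistDens (hr : r ∈ D) (hr₀ : r ≠ 0) (θ : ℝ) :
    HasDerivAt (fun s => twistDens K S.η S.a s θ)
      (-(K ^ 2 / r ^ 5) * ((S.a r θ)⁻¹ * exp (2 * S.η r θ))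
        + K ^ 2 / (2 * r ^ 3) * (Edens S.U S.A S.a r θ * exp (2 * S.η r θ))) r := by
  have ha := (S.apos r hr θ).ne'
  have h := (((hasDerivAt_const r (K ^ 2)).fun_div ((hasDerivAt_pow 4 r).const_mul 4)
    (by positivity)).fun_mul ((S.smooth_η.hasDerivAt_pd1 r θ).const_mul 2).exp).fun_mul
    ((S.smooth_a.hasDerivAt_pd1 r θ).fun_inv ha)
  refine h.congr_deriv ?_
  have hη : pd1 S.η r θ = S.a r θ * r * Edens S.U S.A S.a r θ
      - K ^ 2 / (4 * r ^ 3) * exp (2 * S.η r θ) := eq_sub_of_add_eq (S.eq_ηR r hr θ)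
  rw [hη, S.pd1_a hr]
  field_simp
  ring

lemma prod_univ_subset_nonvanishing (hD : D ⊆ Ioi 0) :
    D ×ˢ univ ⊆ {p : ℝ × ℝ | p.1 ≠ 0 ∧ S.a p.1 p.2 ≠ 0} :=
  fun p hp => ⟨ne_of_gt (hD hp.1), (S.apos p.1 hp.1 p.2).ne'⟩

lemma contDiff_aFdens (r : ℝ) :
    ContDiff ℝ (⊤ : ℕ∞) fun θ => S.a r θ * Fdens S.U S.A r θ := by
  have := S.smooth_a.contDiff_slice r
  have := S.smooth_U.contDiff_slice r
  have := S.smooth_U.pd1.contDiff_slice r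
  have := S.smooth_U.pd2.contDiff_slice r
  have := S.smooth_A.pd1.contDiff_slice r
  have := S.smooth_A.pd2.contDiff_slice r
  unfold Fdens
  fun_prop

lemma continuous_Edens (hr : r ∈ D) : Continuous (Edens S.U S.A S.a r) := by
  have := fun θ => (S.apos r hr θ).ne'
  have := (S.smooth_a.contDiff_slice r).continuous
  have := (S.smooth_U.contDiff_slice r).continuous
  have := (S.smooth_U.pd1.contDiff_slice r).continuous
  have := (S.smooth_U.pd2.contDiff_slice r).continuous
  have := (S.smooth_A.pd1.contDiff_slice r).continuous
  have := (S.smooth_A.pd2.contDiff_slice r).continuous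
  unfold Edens
  fun_prop (disch := assumption)

lemma continuous_dissipationDens (hr : r ∈ D) :
    Continuous (dissipationDens S.U S.A S.a r) := by
  have := fun θ => (S.apos r hr θ).ne'
  have := (S.smooth_a.contDiff_slice r).continuous
  have := (S.smooth_U.contDiff_slice r).continuous
  have := (S.smooth_U.pd1.contDiff_slice r).continuous
  have := (S.smooth_A.pd2.contDiff_slice r).continuous
  unfold dissipationDens
  fun_prop (disch := assumption)

lemma continuous_inv_a (hr : r ∈ D) : Continuous fun θ => (S.a r θ)⁻¹ :=
  (S.smooth_a.contDiff_slice r).continuous.inv₀ fun θ => (S.apos r hr θ).ne'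

lemma continuous_exp_η (r : ℝ) : Continuous fun θ => exp (2 * S.η r θ) :=
  continuous_exp.comp (continuous_const.mul (S.smooth_η.contDiff_slice r).continuous)

lemma hasDerivAt_En (hD : D ⊆ Ioi 0) (hr : r ∈ interior D) :
    HasDerivAt (En S.U S.A S.a)
      (-(K ^ 2 / (2 * r ^ 3)) * (∫ θ in 0..2 * π, Edens S.U S.A S.a r θ * exp (2 * S.η r θ))
        - 2 / r * ∫ θ in 0..2 * π, dissipationDens S.U S.A S.a r θ) r := by
  have hrD := interior_subset hr
  have hr₀ : r ≠ 0 := ne_of_gt (hD hrD)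
  have hG := (contDiffOn_Edens S.smooth_U S.smooth_A S.smooth_a).mono
    ((prod_mono interior_subset subset_rfl).trans (S.prod_univ_subset_nonvanishing hD))
  refine (hasDerivAt_intervalIntegral_of_contDiffOn isOpen_interior (hG.of_le (by norm_num)) hr
    0 (2 * π)).congr_deriv ?_
  refine (intervalIntegral.integral_congr fun θ _ =>
    (S.hasDerivAt_Edens hrD hr₀ θ).deriv).trans ?_
  exact Periodic.mul (S.periodic_a r) (periodic_Fdens S.periodic_U S.periodic_A r)
    |>.intervalIntegral_deriv_sub_sub ((S.contDiff_aFdens r).of_le (m := 1) (by norm_num))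
      ((S.continuous_Edens hrD).mul (S.continuous_exp_η r)) (S.continuous_dissipationDens hrD) _ _

lemma hasDerivAt_EnK (hD : D ⊆ Ioi 0) (hr : r ∈ interior D) :
    HasDerivAt (EnK K S.U S.A S.η S.a)
      (-(K ^ 2 / r ^ 5) * (∫ θ in 0..2 * π, (S.a r θ)⁻¹ * exp (2 * S.η r θ))
        - 2 / r * ∫ θ in 0..2 * π, dissipationDens S.U S.A S.a r θ) r := by
  have hrD := interior_subset hr
  have hr₀ : r ≠ 0 := ne_of_gt (hD hrD)
  have hG := ((contDiffOn_Edens S.smooth_U S.smooth_A S.smooth_a).add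
    (contDiffOn_twistDens K S.smooth_η S.smooth_a)).mono
    ((prod_mono interior_subset subset_rfl).trans (S.prod_univ_subset_nonvanishing hD))
  refine (hasDerivAt_intervalIntegral_of_contDiffOn
    (G := fun r θ => Edens S.U S.A S.a r θ + twistDens K S.η S.a r θ)
    isOpen_interior (hG.of_le (by norm_num)) hr 0 (2 * π)).congr_deriv ?_
  refine (intervalIntegral.integral_congr fun θ _ =>
    ((S.hasDerivAt_Edens hrD hr₀ θ).add (S.hasDerivAt_twistDens hrD hr₀ θ)).deriv).trans ?_
  refine (intervalIntegral.integral_congr fun θ _ => ?_).trans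
    (Periodic.intervalIntegral_deriv_sub_sub (h := fun θ => S.a r θ * Fdens S.U S.A r θ)
      (f := fun θ => (S.a r θ)⁻¹ * exp (2 * S.η r θ))
      (Periodic.mul (S.periodic_a r) (periodic_Fdens S.periodic_U S.periodic_A r))
      ((S.contDiff_aFdens r).of_le (m := 1) (by norm_num))
      ((S.continuous_inv_a hrD).mul (S.continuous_exp_η r)) (S.continuous_dissipationDens hrD) _ _)
  simp only [pd2]
  ring

lemma continuousOn_En (hD : D ⊆ Ioi 0) : ContinuousOn (En S.U S.A S.a) D :=
  continuousOn_intervalIntegral_of_continuousOn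
    ((contDiffOn_Edens S.smooth_U S.smooth_A S.smooth_a).continuousOn.mono
      (S.prod_univ_subset_nonvanishing hD)) _ _

lemma continuousOn_EnK (hD : D ⊆ Ioi 0) : ContinuousOn (EnK K S.U S.A S.η S.a) D :=
  continuousOn_intervalIntegral_of_continuousOn
    (G := fun r θ => Edens S.U S.A S.a r θ + twistDens K S.η S.a r θ)
    (((contDiffOn_Edens S.smooth_U S.smooth_A S.smooth_a).add
      (contDiffOn_twistDens K S.smooth_η S.smooth_a)).continuousOn.mono
      (S.prod_univ_subset_nonvanishing hD)) _ _

lemma antitoneOn_En (hD : D ⊆ Ioi 0) (hDc : Convex ℝ D) : AntitoneOn (En S.U S.A S.a) D := by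
  refine antitoneOn_of_hasDerivWithinAt_nonpos hDc (S.continuousOn_En hD)
    (fun r hr => (S.hasDerivAt_En hD hr).hasDerivWithinAt) fun r hr => ?_
  have hrD := interior_subset hr
  have hr₀ : 0 < r := hD hrD
  have h₁ : 0 ≤ ∫ θ in 0..2 * π, Edens S.U S.A S.a r θ * exp (2 * S.η r θ) :=
    intervalIntegral.integral_nonneg two_pi_pos.le fun θ _ =>
      mul_nonneg (Edens_nonneg (S.apos r hrD θ)) (exp_pos _).le
  have h₂ : 0 ≤ ∫ θ in 0..2 * π, dissipationDens S.U S.A S.a r θ :=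
    intervalIntegral.integral_nonneg two_pi_pos.le fun θ _ =>
      dissipationDens_nonneg (S.apos r hrD θ)
  have := mul_nonneg (by positivity : 0 ≤ K ^ 2 / (2 * r ^ 3)) h₁
  have := mul_nonneg (by positivity : 0 ≤ 2 / r) h₂
  linarith

lemma antitoneOn_EnK (hD : D ⊆ Ioi 0) (hDc : Convex ℝ D) :
    AntitoneOn (EnK K S.U S.A S.η S.a) D := by
  refine antitoneOn_of_hasDerivWithinAt_nonpos hDc (S.continuousOn_EnK hD)
    (fun r hr => (S.hasDerivAt_EnK hD hr).hasDerivWithinAt) fun r hr => ?_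
  have hrD := interior_subset hr
  have hr₀ : 0 < r := hD hrD
  have h₁ : 0 ≤ ∫ θ in 0..2 * π, (S.a r θ)⁻¹ * exp (2 * S.η r θ) :=
    intervalIntegral.integral_nonneg two_pi_pos.le fun θ _ =>
      mul_nonneg (inv_nonneg.2 (S.apos r hrD θ).le) (exp_pos _).le
  have h₂ : 0 ≤ ∫ θ in 0..2 * π, dissipationDens S.U S.A S.a r θ :=
    intervalIntegral.integral_nonneg two_pi_pos.le fun θ _ =>
      dissipationDens_nonneg (S.apos r hrD θ)
  have := mul_nonneg (by positivity : 0 ≤ K ^ 2 / r ^ 5) h₁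
  have := mul_nonneg (by positivity : 0 ≤ 2 / r) h₂
  linarith

end ArealSol

theorem areal_energy_monotonicity_general
    (R₀ Rs K : ℝ) (hR₀ : 0 < R₀)
    (S : ArealSol (Set.Ico R₀ Rs) K) :
    (∀ r r' : ℝ, R₀ ≤ r → r ≤ r' → r' < Rs →
      En S.U S.A S.a r' ≤ En S.U S.A S.a r ∧
      EnK K S.U S.A S.η S.a r' ≤ EnK K S.U S.A S.η S.a r) ∧
    (∀ r ∈ Set.Ioo R₀ Rs,
      HasDerivAt (En S.U S.A S.a)
        (-(K ^ 2 / (2 * r ^ 3)) *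
            (∫ θ in (0:ℝ)..(2 * Real.pi),
              Edens S.U S.A S.a r θ * Real.exp (2 * S.η r θ))
          - (2 / r) *
            (∫ θ in (0:ℝ)..(2 * Real.pi),
              ((S.a r θ)⁻¹ * (pd1 S.U r θ) ^ 2
                + Real.exp (4 * S.U r θ) / (4 * r ^ 2) * S.a r θ * (pd2 S.A r θ) ^ 2)))
        r ∧
      HasDerivAt (EnK K S.U S.A S.η S.a)
        (-(K ^ 2 / r ^ 5) *
            (∫ θ in (0:ℝ)..(2 * Real.pi), (S.a r θ)⁻¹ * Real.exp (2 * S.η r θ))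
          - (2 / r) *
            (∫ θ in (0:ℝ)..(2 * Real.pi),
              ((S.a r θ)⁻¹ * (pd1 S.U r θ) ^ 2
                + Real.exp (4 * S.U r θ) / (4 * r ^ 2) * S.a r θ * (pd2 S.A r θ) ^ 2)))
        r) := by
  have hD : Ico R₀ Rs ⊆ Ioi 0 := fun r hr => hR₀.trans_le hr.1
  refine ⟨fun r r' hr hrr' hr' => ?_, fun r hr => ?_⟩
  · have hmem : r ∈ Ico R₀ Rs := ⟨hr, hrr'.trans_lt hr'⟩
    have hmem' : r' ∈ Ico R₀ Rs := ⟨hr.trans hrr', hr'⟩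
    exact ⟨S.antitoneOn_En hD (convex_Ico R₀ Rs) hmem hmem' hrr',
      S.antitoneOn_EnK hD (convex_Ico R₀ Rs) hmem hmem' hrr'⟩
  · rw [← interior_Ico] at hr
    exact ⟨S.hasDerivAt_En hD hr, S.hasDerivAt_EnK hD hr⟩

/-- **Monotonicity and derivative identities for the areal energies.**
For a smooth areal solution on `[R₀,R*)`, the energies `𝓔` and `𝓔_K` are
non-increasing, and their derivatives are given by the stated identities. -/
theorem areal_energy_monotonicity
    (R₀ Rs K : ℝ) (hR₀ : 0 < R₀) (hRs : R₀ < Rs)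
    (S : ArealSol (Set.Ico R₀ Rs) K) :
    (∀ r r' : ℝ, R₀ ≤ r → r ≤ r' → r' < Rs →
      En S.U S.A S.a r' ≤ En S.U S.A S.a r ∧
      EnK K S.U S.A S.η S.a r' ≤ EnK K S.U S.A S.η S.a r) ∧
    (∀ r ∈ Set.Ioo R₀ Rs,
      HasDerivAt (En S.U S.A S.a)
        (-(K ^ 2 / (2 * r ^ 3)) *
            (∫ θ in (0:ℝ)..(2 * Real.pi),
              Edens S.U S.A S.a r θ * Real.exp (2 * S.η r θ))
          - (2 / r) *
            (∫ θ in (0:ℝ)..(2 * Real.pi),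
              ((S.a r θ)⁻¹ * (pd1 S.U r θ) ^ 2
                + Real.exp (4 * S.U r θ) / (4 * r ^ 2) * S.a r θ * (pd2 S.A r θ) ^ 2)))
        r ∧
      HasDerivAt (EnK K S.U S.A S.η S.a)
        (-(K ^ 2 / r ^ 5) *
            (∫ θ in (0:ℝ)..(2 * Real.pi), (S.a r θ)⁻¹ * Real.exp (2 * S.η r θ))
          - (2 / r) *
            (∫ θ in (0:ℝ)..(2 * Real.pi),
              ((S.a r θ)⁻¹ * (pd1 S.U r θ) ^ 2
                + Real.exp (4 * S.U r θ) / (4 * r ^ 2) * S.a r θ * (pd2 S.A r θ) ^ 2)))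
        r) :=
  areal_energy_monotonicity_general R₀ Rs K hR₀ S
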